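/- Let H be a Hopf algebra, A an algebra, φ : H ⊗ A → A and ω : H ⊗ H → A, with ψ(h ⊗ a) = Σ φ(h₍₁₎ ⊗ a) ⊗ h₍₂₎ and σ(h ⊗ g) = Σ ω(h₍₁₎ ⊗ g₍₁₎) ⊗ h₍₂₎g₍₂₎. Then the partial twisted condition Σ φ(h₍₁₎ ⊗ φ(g₍₁₎ ⊗ a)) ω(h₍₂₎ ⊗ g₍₂₎) = Σ ω(h₍₁₎ ⊗ g₍₁₎) φ(h₍₂₎g₍₂₎ ⊗ a) holds for all h, g ∈ H, a ∈ A if and only if the twisted condition (μ_A ⊗ H) ∘ (A ⊗ ψ) ∘ (σ ⊗ A) = (μ_A ⊗ H) ∘ (A ⊗ σ) ∘ (ψ ⊗ H) ∘ (H ⊗ ψ) holds. -/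

import Mathlib

open TensorProduct

variable {R A V H : Type*} [CommRing R] [Ring A] [Algebra R A]
  [AddCommGroup V] [Module R V] [Ring H] [HopfAlgebra R H]

/-- (μ_A ⊗ V) ∘ (A ⊗ ψ) ∘ (ψ ⊗ A) : (V ⊗ A) ⊗ A → A ⊗ V -/
noncomputable def psiMulLHS (ψ : V ⊗[R] A →ₗ[R] A ⊗[R] V) :
    (V ⊗[R] A) ⊗[R] A →ₗ[R] A ⊗[R] V :=
  TensorProduct.map (LinearMap.mul' R A) LinearMap.id
    ∘ₗ (TensorProduct.assoc R A A V).symm.toLinearMap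
    ∘ₗ LinearMap.lTensor A ψ
    ∘ₗ (TensorProduct.assoc R A V A).toLinearMap
    ∘ₗ LinearMap.rTensor A ψ

/-- ψ ∘ (V ⊗ μ_A) : (V ⊗ A) ⊗ A → A ⊗ V -/
noncomputable def psiMulRHS (ψ : V ⊗[R] A →ₗ[R] A ⊗[R] V) :
    (V ⊗[R] A) ⊗[R] A →ₗ[R] A ⊗[R] V :=
  ψ ∘ₗ LinearMap.lTensor V (LinearMap.mul' R A)
    ∘ₗ (TensorProduct.assoc R V A A).toLinearMap

/-- ∇ = (μ_A ⊗ V) ∘ (A ⊗ ψ) ∘ (A ⊗ V ⊗ η_A) : A ⊗ V → A ⊗ V -/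
noncomputable def nabla (ψ : V ⊗[R] A →ₗ[R] A ⊗[R] V) :
    A ⊗[R] V →ₗ[R] A ⊗[R] V :=
  TensorProduct.map (LinearMap.mul' R A) LinearMap.id
    ∘ₗ (TensorProduct.assoc R A A V).symm.toLinearMap
    ∘ₗ LinearMap.lTensor A ψ
    ∘ₗ LinearMap.lTensor A ((TensorProduct.mk R V A).flip 1)

/-- ψ(h ⊗ a) = Σ φ(h₍₁₎ ⊗ a) ⊗ h₍₂₎. -/
noncomputable def psiOf (φ : H ⊗[R] A →ₗ[R] A) : H ⊗[R] A →ₗ[R] A ⊗[R] H :=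
  LinearMap.rTensor H φ
    ∘ₗ (TensorProduct.assoc R H A H).symm.toLinearMap
    ∘ₗ LinearMap.lTensor H (TensorProduct.comm R H A).toLinearMap
    ∘ₗ (TensorProduct.assoc R H H A).toLinearMap
    ∘ₗ LinearMap.rTensor A (Coalgebra.comul : H →ₗ[R] H ⊗[R] H)

/-- σ(h ⊗ g) = Σ ω(h₍₁₎ ⊗ g₍₁₎) ⊗ h₍₂₎g₍₂₎. -/
noncomputable def sigmaOf (ω : H ⊗[R] H →ₗ[R] A) : H ⊗[R] H →ₗ[R] A ⊗[R] H :=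
  TensorProduct.map ω (LinearMap.mul' R H)
    ∘ₗ (TensorProduct.tensorTensorTensorComm R H H H H).toLinearMap
    ∘ₗ TensorProduct.map (Coalgebra.comul : H →ₗ[R] H ⊗[R] H)
        (Coalgebra.comul : H →ₗ[R] H ⊗[R] H)

/-- Condition (ii) of a twisted partial action:
φ(h ⊗ ab) = Σ φ(h₍₁₎ ⊗ a) φ(h₍₂₎ ⊗ b), as maps H ⊗ (A ⊗ A) → A. -/
def IsPartiallyMultiplicative (φ : H ⊗[R] A →ₗ[R] A) : Prop :=
  φ ∘ₗ LinearMap.lTensor H (LinearMap.mul' R A) =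
    LinearMap.mul' R A ∘ₗ TensorProduct.map φ φ
      ∘ₗ (TensorProduct.tensorTensorTensorComm R H H A A).toLinearMap
      ∘ₗ LinearMap.rTensor (A ⊗[R] A) (Coalgebra.comul : H →ₗ[R] H ⊗[R] H)

/-- Twisted condition LHS: (μ_A ⊗ V) ∘ (A ⊗ ψ) ∘ (σ ⊗ A) : (V ⊗ V) ⊗ A → A ⊗ V. -/
noncomputable def twistedLHS (ψ : V ⊗[R] A →ₗ[R] A ⊗[R] V)
    (σ : V ⊗[R] V →ₗ[R] A ⊗[R] V) : (V ⊗[R] V) ⊗[R] A →ₗ[R] A ⊗[R] V :=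
  TensorProduct.map (LinearMap.mul' R A) LinearMap.id
    ∘ₗ (TensorProduct.assoc R A A V).symm.toLinearMap
    ∘ₗ LinearMap.lTensor A ψ
    ∘ₗ (TensorProduct.assoc R A V A).toLinearMap
    ∘ₗ LinearMap.rTensor A σ

/-- Twisted condition RHS: (μ_A ⊗ V) ∘ (A ⊗ σ) ∘ (ψ ⊗ V) ∘ (V ⊗ ψ) : V ⊗ (V ⊗ A) → A ⊗ V. -/
noncomputable def twistedRHS (ψ : V ⊗[R] A →ₗ[R] A ⊗[R] V)
    (σ : V ⊗[R] V →ₗ[R] A ⊗[R] V) : V ⊗[R] (V ⊗[R] A) →ₗ[R] A ⊗[R] V :=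
  TensorProduct.map (LinearMap.mul' R A) LinearMap.id
    ∘ₗ (TensorProduct.assoc R A A V).symm.toLinearMap
    ∘ₗ LinearMap.lTensor A σ
    ∘ₗ (TensorProduct.assoc R A V V).toLinearMap
    ∘ₗ LinearMap.rTensor V ψ
    ∘ₗ (TensorProduct.assoc R V A V).symm.toLinearMap
    ∘ₗ LinearMap.lTensor V ψ

/-- Cocycle condition LHS: (μ_A ⊗ V) ∘ (A ⊗ σ) ∘ (σ ⊗ V) : (V ⊗ V) ⊗ V → A ⊗ V. -/
noncomputable def cocycleLHS (σ : V ⊗[R] V →ₗ[R] A ⊗[R] V) :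
    (V ⊗[R] V) ⊗[R] V →ₗ[R] A ⊗[R] V :=
  TensorProduct.map (LinearMap.mul' R A) LinearMap.id
    ∘ₗ (TensorProduct.assoc R A A V).symm.toLinearMap
    ∘ₗ LinearMap.lTensor A σ
    ∘ₗ (TensorProduct.assoc R A V V).toLinearMap
    ∘ₗ LinearMap.rTensor V σ

/-- Cocycle condition RHS: (μ_A ⊗ V) ∘ (A ⊗ σ) ∘ (ψ ⊗ V) ∘ (V ⊗ σ) : V ⊗ (V ⊗ V) → A ⊗ V. -/
noncomputable def cocycleRHS (ψ : V ⊗[R] A →ₗ[R] A ⊗[R] V)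
    (σ : V ⊗[R] V →ₗ[R] A ⊗[R] V) : V ⊗[R] (V ⊗[R] V) →ₗ[R] A ⊗[R] V :=
  TensorProduct.map (LinearMap.mul' R A) LinearMap.id
    ∘ₗ (TensorProduct.assoc R A A V).symm.toLinearMap
    ∘ₗ LinearMap.lTensor A σ
    ∘ₗ (TensorProduct.assoc R A V V).toLinearMap
    ∘ₗ LinearMap.rTensor V ψ
    ∘ₗ (TensorProduct.assoc R V A V).symm.toLinearMap
    ∘ₗ LinearMap.lTensor V σ

/-- Auxiliary map V ⊗ (A ⊗ V) → A ⊗ V used in the weak crossed product. -/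
noncomputable def wcpAux (ψ : V ⊗[R] A →ₗ[R] A ⊗[R] V)
    (σ : V ⊗[R] V →ₗ[R] A ⊗[R] V) : V ⊗[R] (A ⊗[R] V) →ₗ[R] A ⊗[R] V :=
  TensorProduct.map (LinearMap.mul' R A) LinearMap.id
    ∘ₗ (TensorProduct.assoc R A A V).symm.toLinearMap
    ∘ₗ LinearMap.lTensor A σ
    ∘ₗ (TensorProduct.assoc R A V V).toLinearMap
    ∘ₗ LinearMap.rTensor V ψ
    ∘ₗ (TensorProduct.assoc R V A V).symm.toLinearMap

/-- The weak crossed product multiplication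
μ_{A⊗V} = (μ_A ⊗ V) ∘ (μ_A ⊗ σ) ∘ (A ⊗ ψ ⊗ V) on A ⊗ V. -/
noncomputable def wcpMul (ψ : V ⊗[R] A →ₗ[R] A ⊗[R] V)
    (σ : V ⊗[R] V →ₗ[R] A ⊗[R] V) :
    (A ⊗[R] V) ⊗[R] (A ⊗[R] V) →ₗ[R] A ⊗[R] V :=
  TensorProduct.map (LinearMap.mul' R A) LinearMap.id
    ∘ₗ (TensorProduct.assoc R A A V).symm.toLinearMap
    ∘ₗ LinearMap.lTensor A (wcpAux ψ σ)
    ∘ₗ (TensorProduct.assoc R A V (A ⊗[R] V)).toLinearMap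

/-- Partial twisted condition LHS: μ_A ∘ (A ⊗ ω) ∘ (ψ ⊗ H) ∘ (H ⊗ ψ),
i.e. (h ⊗ g ⊗ a) ↦ Σ φ(h₍₁₎ ⊗ φ(g₍₁₎ ⊗ a)) ω(h₍₂₎ ⊗ g₍₂₎). -/
noncomputable def partialTwistedLHS (φ : H ⊗[R] A →ₗ[R] A)
    (ω : H ⊗[R] H →ₗ[R] A) : H ⊗[R] (H ⊗[R] A) →ₗ[R] A :=
  LinearMap.mul' R A
    ∘ₗ LinearMap.lTensor A ω
    ∘ₗ (TensorProduct.assoc R A H H).toLinearMap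
    ∘ₗ LinearMap.rTensor H (psiOf φ)
    ∘ₗ (TensorProduct.assoc R H A H).symm.toLinearMap
    ∘ₗ LinearMap.lTensor H (psiOf φ)

/-- Partial twisted condition RHS: μ_A ∘ (A ⊗ φ) ∘ (σ ⊗ A),
i.e. (h ⊗ g ⊗ a) ↦ Σ ω(h₍₁₎ ⊗ g₍₁₎) φ(h₍₂₎g₍₂₎ ⊗ a). -/
noncomputable def partialTwistedRHS (φ : H ⊗[R] A →ₗ[R] A)
    (ω : H ⊗[R] H →ₗ[R] A) : (H ⊗[R] H) ⊗[R] A →ₗ[R] A :=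
  LinearMap.mul' R A
    ∘ₗ LinearMap.lTensor A φ
    ∘ₗ (TensorProduct.assoc R A H A).toLinearMap
    ∘ₗ LinearMap.rTensor A (sigmaOf ω)

/-- Partial cocycle condition LHS:
(h ⊗ g ⊗ l) ↦ Σ φ(h₍₁₎ ⊗ ω(g₍₁₎ ⊗ l₍₁₎)) ω(h₍₂₎ ⊗ g₍₂₎l₍₂₎),
i.e. μ_A ∘ (A ⊗ ω) ∘ (ψ ⊗ H) ∘ (H ⊗ σ). -/
noncomputable def partialCocycleLHS (φ : H ⊗[R] A →ₗ[R] A)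
    (ω : H ⊗[R] H →ₗ[R] A) : H ⊗[R] (H ⊗[R] H) →ₗ[R] A :=
  LinearMap.mul' R A
    ∘ₗ LinearMap.lTensor A ω
    ∘ₗ (TensorProduct.assoc R A H H).toLinearMap
    ∘ₗ LinearMap.rTensor H (psiOf φ)
    ∘ₗ (TensorProduct.assoc R H A H).symm.toLinearMap
    ∘ₗ LinearMap.lTensor H (sigmaOf ω)

/-- Partial cocycle condition RHS:
(h ⊗ g ⊗ l) ↦ Σ ω(h₍₁₎ ⊗ g₍₁₎) ω(h₍₂₎g₍₂₎ ⊗ l), i.e. μ_A ∘ (A ⊗ ω) ∘ (σ ⊗ H). -/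
noncomputable def partialCocycleRHS (ω : H ⊗[R] H →ₗ[R] A) :
    (H ⊗[R] H) ⊗[R] H →ₗ[R] A :=
  LinearMap.mul' R A
    ∘ₗ LinearMap.lTensor A ω
    ∘ₗ (TensorProduct.assoc R A H H).toLinearMap
    ∘ₗ LinearMap.rTensor H (sigmaOf ω)


/-! Regard `C = H ⊗ H` as a coalgebra; multiplication `μ : C → H` is then a coalgebra map.
By coassociativity of `C`, the two sides of the twisted condition are
`x ⊗ a ↦ ∑ F (x₍₁₎ ⊗ a) ⊗ μ x₍₂₎`, with `F` the right, respectively left, side of the partial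
twisted condition. The assignment of this map to `F` is injective: applying `ε_H` to the second
factor gives back `F`, by the counit axiom and `ε_H ∘ μ = ε_C`. -/

open Coalgebra

section ComulExtend

variable {R C M N : Type*} [CommSemiring R] [AddCommMonoid C] [Module R C] [Coalgebra R C]
  [AddCommMonoid M] [Module R M] [AddCommMonoid N] [Module R N]

/-- `c ⊗ n ↦ ∑ F (c₍₁₎ ⊗ n) ⊗ c₍₂₎`; `psiOf φ` is `comulExtend φ` by definition. -/
noncomputable def comulExtend (F : C ⊗[R] N →ₗ[R] M) : C ⊗[R] N →ₗ[R] M ⊗[R] C :=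
  LinearMap.rTensor C F
    ∘ₗ (TensorProduct.assoc R C N C).symm.toLinearMap
    ∘ₗ LinearMap.lTensor C (TensorProduct.comm R C N).toLinearMap
    ∘ₗ (TensorProduct.assoc R C C N).toLinearMap
    ∘ₗ LinearMap.rTensor N (comul : C →ₗ[R] C ⊗[R] C)

lemma comulExtend_tmul (F : C ⊗[R] N →ₗ[R] M) {c : C} {ι : Type*} (𝓡 : Repr R c ι) (n : N) :
    comulExtend F (c ⊗ₜ n) = ∑ i ∈ 𝓡.index, F (𝓡.left i ⊗ₜ n) ⊗ₜ 𝓡.right i := by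
  simp [comulExtend, ← 𝓡.eq, sum_tmul, map_sum]

lemma rid_comp_lTensor_counit_comp_comulExtend (F : C ⊗[R] N →ₗ[R] M) :
    (TensorProduct.rid R M).toLinearMap ∘ₗ LinearMap.lTensor M counit ∘ₗ comulExtend F = F := by
  refine TensorProduct.ext' fun c n => ?_
  have := sum_map_tmul_counit_eq (F ∘ₗ (TensorProduct.mk R C N).flip n) c (repr := ℛ R c)
  apply_fun TensorProduct.rid R M at this
  simpa [comulExtend_tmul F (ℛ R c), map_sum] using this

lemma lTensor_comp_comulExtend_injective {D : Type*} [AddCommMonoid D] [Module R D]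
    [Coalgebra R D] (f : C →ₗc[R] D) :
    Function.Injective fun F : C ⊗[R] N →ₗ[R] M ↦
      LinearMap.lTensor M (f : C →ₗ[R] D) ∘ₗ comulExtend F := by
  intro F G hFG
  have retract : ∀ F : C ⊗[R] N →ₗ[R] M, (TensorProduct.rid R M).toLinearMap ∘ₗ
      LinearMap.lTensor M counit ∘ₗ (LinearMap.lTensor M (f : C →ₗ[R] D) ∘ₗ comulExtend F) = F := by
    intro F
    rw [← LinearMap.comp_assoc _ _ (LinearMap.lTensor M counit), ← LinearMap.lTensor_comp,
      CoalgHomClass.counit_comp, rid_comp_lTensor_counit_comp_comulExtend]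
  dsimp only at hFG
  rw [← retract F, hFG, retract]

lemma sum_mul_tmul_eq {A : Type*} [Semiring A] [Algebra R A] (f g : C →ₗ[R] A) (k : C →ₗ[R] M)
    {c : C} {ι : Type*} {κ Λ : ι → Type*} (𝓡 : Repr R c ι)
    (𝓡₁ : ∀ i, Repr R (𝓡.left i) (κ i)) (𝓡₂ : ∀ i, Repr R (𝓡.right i) (Λ i)) :
    ∑ i ∈ 𝓡.index, ∑ j ∈ (𝓡₂ i).index,
        (f (𝓡.left i) * g ((𝓡₂ i).left j)) ⊗ₜ[R] k ((𝓡₂ i).right j) =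
      ∑ i ∈ 𝓡.index, ∑ j ∈ (𝓡₁ i).index,
        (f ((𝓡₁ i).left j) * g ((𝓡₁ i).right j)) ⊗ₜ[R] k (𝓡.right i) := by
  have := congrArg (TensorProduct.map (LinearMap.mul' R A) LinearMap.id ∘ₗ
      (TensorProduct.assoc R A A M).symm.toLinearMap ∘ₗ TensorProduct.map f (TensorProduct.map g k))
    (sum_tmul_tmul_eq 𝓡 𝓡₁ 𝓡₂)
  simpa [map_sum] using this.symm

end ComulExtend

section TwistedCondition

variable (φ : H ⊗[R] A →ₗ[R] A) (ω : H ⊗[R] H →ₗ[R] A)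

noncomputable def actTwice (a : A) : H ⊗[R] H →ₗ[R] A :=
  φ ∘ₗ LinearMap.lTensor H (φ ∘ₗ (TensorProduct.mk R H A).flip a)

@[simp]
lemma actTwice_tmul (a : A) (h g : H) : actTwice φ a (h ⊗ₜ g) = φ (h ⊗ₜ φ (g ⊗ₜ a)) := rfl

lemma psiOf_tmul {h : H} {ι : Type*} (𝓡 : Repr R h ι) (a : A) :
    psiOf φ (h ⊗ₜ a) = ∑ i ∈ 𝓡.index, φ (𝓡.left i ⊗ₜ a) ⊗ₜ 𝓡.right i :=
  comulExtend_tmul φ 𝓡 a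

lemma sigmaOf_apply {x : H ⊗[R] H} {ι : Type*} (𝓡 : Repr R x ι) :
    sigmaOf ω x = ∑ i ∈ 𝓡.index, ω (𝓡.left i) ⊗ₜ LinearMap.mul' R H (𝓡.right i) := by
  change TensorProduct.map ω (LinearMap.mul' R H) (comul x) = _
  simp [← 𝓡.eq, map_sum]

lemma partialTwistedRHS_tmul {x : H ⊗[R] H} {ι : Type*} (𝓡 : Repr R x ι) (a : A) :
    partialTwistedRHS φ ω (x ⊗ₜ a) =
      ∑ i ∈ 𝓡.index, ω (𝓡.left i) * φ (LinearMap.mul' R H (𝓡.right i) ⊗ₜ a) := by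
  simp [partialTwistedRHS, sigmaOf_apply ω 𝓡, sum_tmul, map_sum]

lemma partialTwistedLHS_tmul {h g : H} {ι κ : Type*} (𝓡h : Repr R h ι) (𝓡g : Repr R g κ)
    (a : A) :
    partialTwistedLHS φ ω (h ⊗ₜ (g ⊗ₜ a)) =
      ∑ i ∈ (𝓡h.tmul 𝓡g).index,
        actTwice φ a ((𝓡h.tmul 𝓡g).left i) * ω ((𝓡h.tmul 𝓡g).right i) := by
  simp [partialTwistedLHS, psiOf_tmul φ 𝓡g, psiOf_tmul φ 𝓡h, tmul_sum, sum_tmul, map_sum,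
    Finset.sum_product, Finset.sum_comm (s := 𝓡g.index)]

lemma twistedLHS_tmul {x : H ⊗[R] H} {ι : Type*} {Λ : ι → Type*} (𝓡 : Repr R x ι)
    (𝓡₂ : ∀ i, Repr R (𝓡.right i) (Λ i)) (a : A) :
    twistedLHS (psiOf φ) (sigmaOf ω) (x ⊗ₜ a) =
      ∑ i ∈ 𝓡.index, ∑ j ∈ (𝓡₂ i).index,
        (ω (𝓡.left i) * φ (LinearMap.mul' R H ((𝓡₂ i).left j) ⊗ₜ a))
          ⊗ₜ LinearMap.mul' R H ((𝓡₂ i).right j) := by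
  simp only [twistedLHS, LinearMap.comp_apply, LinearMap.rTensor_tmul, sigmaOf_apply ω 𝓡,
    sum_tmul, map_sum]
  refine Finset.sum_congr rfl fun i _ => ?_
  have hψ := psiOf_tmul φ ((𝓡₂ i).induced (Bialgebra.mulCoalgHom R H)) a
  simp only [Repr.induced_index, Repr.induced_left, Repr.induced_right,
    Bialgebra.coe_mulCoalgHom, Function.comp_apply] at hψ
  simp [hψ, tmul_sum, map_sum]

lemma twistedRHS_tmul {h g : H} {ι κ : Type*} {Λ : ι × κ → Type*} (𝓡h : Repr R h ι)
    (𝓡g : Repr R g κ) (𝓡₂ : ∀ i, Repr R ((𝓡h.tmul 𝓡g).right i) (Λ i)) (a : A) :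
    twistedRHS (psiOf φ) (sigmaOf ω) (h ⊗ₜ (g ⊗ₜ a)) =
      ∑ i ∈ (𝓡h.tmul 𝓡g).index, ∑ j ∈ (𝓡₂ i).index,
        (actTwice φ a ((𝓡h.tmul 𝓡g).left i) * ω ((𝓡₂ i).left j))
          ⊗ₜ LinearMap.mul' R H ((𝓡₂ i).right j) := by
  simp only [twistedRHS, LinearMap.coe_comp, LinearEquiv.coe_coe, Function.comp_apply,
    LinearMap.lTensor_tmul, psiOf_tmul φ 𝓡g, tmul_sum, map_sum, assoc_symm_tmul,
    LinearMap.rTensor_tmul, psiOf_tmul φ 𝓡h, sum_tmul, Finset.sum_comm (s := 𝓡g.index),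
    assoc_tmul, Repr.tmul_index, Repr.tmul_left, actTwice_tmul, Finset.sum_product]
  refine Finset.sum_congr rfl fun i _ => Finset.sum_congr rfl fun j _ => ?_
  have hσ : sigmaOf ω (𝓡h.right i ⊗ₜ 𝓡g.right j) = _ := sigmaOf_apply ω (𝓡₂ (i, j))
  simp [hσ, tmul_sum, map_sum]

theorem twistedLHS_psiOf_sigmaOf :
    twistedLHS (psiOf φ) (sigmaOf ω) =
      LinearMap.lTensor A (LinearMap.mul' R H) ∘ₗ comulExtend (partialTwistedRHS φ ω) := by
  refine TensorProduct.ext' fun x a => ?_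
  let 𝓡 := ℛ R x
  have coassoc := sum_mul_tmul_eq ω (φ ∘ₗ (TensorProduct.mk R H A).flip a ∘ₗ LinearMap.mul' R H)
    (LinearMap.mul' R H) 𝓡 (fun i => ℛ R (𝓡.left i)) (fun i => ℛ R (𝓡.right i))
  simp only [LinearMap.comp_apply, LinearMap.flip_apply, TensorProduct.mk_apply] at coassoc
  rw [twistedLHS_tmul φ ω 𝓡 (fun i => ℛ R (𝓡.right i)), coassoc, LinearMap.comp_apply,
    comulExtend_tmul _ 𝓡, map_sum]
  simp [partialTwistedRHS_tmul φ ω (ℛ R _), sum_tmul]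

theorem twistedRHS_psiOf_sigmaOf_comp_assoc :
    twistedRHS (psiOf φ) (sigmaOf ω) ∘ₗ (TensorProduct.assoc R H H A).toLinearMap =
      LinearMap.lTensor A (LinearMap.mul' R H) ∘ₗ
        comulExtend (partialTwistedLHS φ ω ∘ₗ (TensorProduct.assoc R H H A).toLinearMap) := by
  refine TensorProduct.ext_threefold fun h g a => ?_
  let 𝓡 := (ℛ R h).tmul (ℛ R g)
  have coassoc := sum_mul_tmul_eq (actTwice φ a) ω (LinearMap.mul' R H) 𝓡
    (fun i => ((ℛ R ((ℛ R h).left i.1)).tmul (ℛ R ((ℛ R g).left i.2)) : Repr R (𝓡.left i) _))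
    (fun i => ℛ R (𝓡.right i))
  rw [LinearMap.comp_apply, LinearEquiv.coe_coe, TensorProduct.assoc_tmul,
    twistedRHS_tmul φ ω (ℛ R h) (ℛ R g) (fun i => ℛ R (𝓡.right i)), coassoc,
    LinearMap.comp_apply, comulExtend_tmul _ 𝓡, map_sum]
  refine Finset.sum_congr rfl fun i _ => ?_
  simp [partialTwistedLHS_tmul φ ω (ℛ R _) (ℛ R _), sum_tmul, 𝓡]

end TwistedCondition

theorem partialTwisted_iff_twisted (φ : H ⊗[R] A →ₗ[R] A)
    (ω : H ⊗[R] H →ₗ[R] A) :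
    (partialTwistedLHS φ ω ∘ₗ (TensorProduct.assoc R H H A).toLinearMap =
        partialTwistedRHS φ ω) ↔
      (twistedLHS (psiOf φ) (sigmaOf ω) =
        twistedRHS (psiOf φ) (sigmaOf ω)
          ∘ₗ (TensorProduct.assoc R H H A).toLinearMap) := by
  rw [twistedLHS_psiOf_sigmaOf, twistedRHS_psiOf_sigmaOf_comp_assoc, eq_comm]
  exact (lTensor_comp_comulExtend_injective (Bialgebra.mulCoalgHom R H)).eq_iff.symm
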